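/- Let X be an anisotropic projective quadric over a field k. Then every closed point of X has even degree over k. -/

import Mathlib

open scoped TensorProduct

open Polynomial MvPolynomial


/-- coeff of a product at the sum of degree bounds. -/
lemma coeff_prod_at_bounds {k ι : Type*} [CommSemiring k] (s : Finset ι) (f : ι → k[X])
    (n : ι → ℕ) (h : ∀ i ∈ s, (f i).natDegree ≤ n i) :
    (∏ i ∈ s, f i).coeff (∑ i ∈ s, n i) = ∏ i ∈ s, (f i).coeff (n i) := by
  induction s using Finset.cons_induction with
  | empty => simp
  | cons a s ha ih =>
    rw [Finset.prod_cons, Finset.sum_cons, Finset.prod_cons,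
      coeff_mul_add_eq_of_natDegree_le (h a (s.mem_cons_self a)) ?_,
      ih (fun i hi => h i (Finset.mem_cons_of_mem hi))]
    exact (natDegree_prod_le _ _).trans (Finset.sum_le_sum fun i hi => h i (Finset.mem_cons_of_mem hi))

/-- odd-degree polynomials have an odd-degree irreducible factor -/
lemma exists_odd_irreducible_factor {k : Type*} [Field k] :
    ∀ (N : ℕ) (h : k[X]), h.natDegree ≤ N → h ≠ 0 → Odd h.natDegree →
      ∃ p : k[X], Irreducible p ∧ p ∣ h ∧ Odd p.natDegree := by
  intro N
  induction N with
  | zero => intro h hle h0 hodd; interval_cases hd : h.natDegree; · exact absurd hodd (by simp)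
  | succ N ih =>
    intro h hle h0 hodd
    have hu : ¬ IsUnit h := by
      intro hu
      rw [Polynomial.isUnit_iff] at hu
      obtain ⟨r, hr, rfl⟩ := hu
      simp [natDegree_C] at hodd
    obtain ⟨p, hp, hdvd⟩ := WfDvdMonoid.exists_irreducible_factor hu h0
    by_cases hpodd : Odd p.natDegree
    · exact ⟨p, hp, hdvd, hpodd⟩
    · obtain ⟨h', rfl⟩ := hdvd
      have hp0 : p ≠ 0 := hp.ne_zero
      have h'0 : h' ≠ 0 := right_ne_zero_of_mul h0
      have hdeg : (p * h').natDegree = p.natDegree + h'.natDegree := natDegree_mul hp0 h'0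
      have hppos : 0 < p.natDegree := hp.natDegree_pos
      have h'odd : Odd h'.natDegree := by
        rw [hdeg] at hodd
        rcases Nat.even_or_odd p.natDegree with he | ho
        · rcases hodd with ⟨t, ht⟩; rcases he with ⟨u, hu2⟩
          refine ⟨t - u, by omega⟩
        · exact absurd ho hpodd
      obtain ⟨q, hq1, hq2, hq3⟩ := ih h' (by omega) h'0 h'odd
      exact ⟨q, hq1, hq2.trans (dvd_mul_left _ _), hq3⟩

lemma aeval_mul_of_isHomogeneous {k A σ : Type*} [CommSemiring k] [CommSemiring A] [Algebra k A]
    {P : MvPolynomial σ k} {N : ℕ} (hP : P.IsHomogeneous N) (a : A) (g : σ → A) :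
    MvPolynomial.aeval (fun i => a * g i) P = a ^ N * MvPolynomial.aeval g P := by
  rw [MvPolynomial.aeval_def, MvPolynomial.aeval_def, MvPolynomial.eval₂_eq,
    MvPolynomial.eval₂_eq, Finset.mul_sum]
  refine Finset.sum_congr rfl fun d hd => ?_
  have hdeg : ∑ i ∈ d.support, d i = N := by
    have := hP (MvPolynomial.mem_support_iff.mp hd)
    simpa [Finsupp.weight, Finsupp.linearCombination, Finsupp.sum] using this
  rw [← hdeg]
  simp_rw [mul_pow]
  rw [Finset.prod_mul_distrib, Finset.prod_pow_eq_pow_sum]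
  ring

lemma natDegree_aeval_le {k σ : Type*} [CommSemiring k] {P : MvPolynomial σ k} {N : ℕ}
    (hP : P.IsHomogeneous N) (g : σ → k[X]) {d : ℕ} (hg : ∀ i, (g i).natDegree ≤ d) :
    (MvPolynomial.aeval g P).natDegree ≤ N * d := by
  rw [MvPolynomial.aeval_def, MvPolynomial.eval₂_eq]
  refine Polynomial.natDegree_sum_le_of_forall_le _ _ fun u hu => ?_
  have hdeg : ∑ i ∈ u.support, u i = N := by
    simpa [Finsupp.weight, Finsupp.linearCombination, Finsupp.sum] using
      hP (MvPolynomial.mem_support_iff.mp hu)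
  refine (natDegree_mul_le).trans ?_
  have h1 : (algebraMap k k[X] (MvPolynomial.coeff u P)).natDegree = 0 := by
    simp [Polynomial.algebraMap_eq]
  rw [h1, zero_add]
  refine (Polynomial.natDegree_prod_le _ _).trans ?_
  calc ∑ i ∈ u.support, ((g i) ^ u i).natDegree
      ≤ ∑ i ∈ u.support, u i * d :=
        Finset.sum_le_sum fun i _ => (Polynomial.natDegree_pow_le).trans
          (Nat.mul_le_mul_left _ (hg i))
    _ = N * d := by rw [← Finset.sum_mul, hdeg]

lemma coeff_aeval_top {k σ : Type*} [CommSemiring k] {P : MvPolynomial σ k} {N : ℕ}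
    (hP : P.IsHomogeneous N) (g : σ → k[X]) {d : ℕ} (hg : ∀ i, (g i).natDegree ≤ d) :
    (MvPolynomial.aeval g P).coeff (N * d) =
      MvPolynomial.eval (fun i => (g i).coeff d) P := by
  rw [MvPolynomial.aeval_def, MvPolynomial.eval₂_eq, MvPolynomial.eval_eq,
    Polynomial.finset_sum_coeff]
  refine Finset.sum_congr rfl fun u hu => ?_
  have hdeg : ∑ i ∈ u.support, u i = N := by
    simpa [Finsupp.weight, Finsupp.linearCombination, Finsupp.sum] using
      hP (MvPolynomial.mem_support_iff.mp hu)
  rw [Polynomial.algebraMap_eq, Polynomial.coeff_C_mul]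
  congr 1
  have : N * d = ∑ i ∈ u.support, u i * d := by rw [← Finset.sum_mul, hdeg]
  rw [this, coeff_prod_at_bounds _ _ _ (fun i _ =>
    (Polynomial.natDegree_pow_le).trans (Nat.mul_le_mul_left _ (hg i)))]
  exact Finset.prod_congr rfl fun i _ => Polynomial.coeff_pow_of_natDegree_le (hg i)
universe u

lemma mk_aeval_comm {k : Type u} [Field k] (f : k[X]) {m : ℕ} (P : MvPolynomial (Fin m) k)
    (G : Fin m → k[X]) :
    AdjoinRoot.mk f (MvPolynomial.aeval G P) =
      MvPolynomial.aeval (fun i => AdjoinRoot.mk f (G i)) P := by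
  rw [MvPolynomial.aeval_def, MvPolynomial.aeval_def, MvPolynomial.eval₂_comp_left]
  rfl

lemma springer_step {k : Type u} [Field k] {m : ℕ} {P : MvPolynomial (Fin m) k}
    (hP : P.IsHomogeneous 2) (haniso : ∀ c : Fin m → k, MvPolynomial.eval c P = 0 → c = 0)
    {f : k[X]} (hirr : Irreducible f) (hmon : f.Monic) (hodd : Odd f.natDegree)
    (IH : ∀ n' < f.natDegree, Odd n' →
      ∀ (E : Type u) [Field E] [Algebra k E] [FiniteDimensional k E],
        Module.finrank k E = n' →
        ∀ w : Fin m → E, MvPolynomial.aeval w P = 0 → w = 0) :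
    ∀ w : Fin m → AdjoinRoot f, MvPolynomial.aeval w P = 0 → w = 0 := by
  haveI : Fact (Irreducible f) := ⟨hirr⟩
  letI : DecidableEq k := Classical.decEq k
  letI : NormalizedGCDMonoid k[X] := Polynomial.normalizedGcdMonoid
  intro w hw
  by_contra hw0
  set n := f.natDegree with hn
  have hn1 : 1 ≤ n := hirr.natDegree_pos
  have hf1 : f ≠ 1 := fun h => hirr.not_isUnit (h ▸ isUnit_one)
  -- lift w to polynomials of degree < n
  have hmk : ∀ i, ∃ g : k[X], AdjoinRoot.mk f g = w i ∧ g.natDegree < n := by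
    intro i
    obtain ⟨g₀, hg₀⟩ := AdjoinRoot.mk_surjective (w i)
    refine ⟨g₀ %ₘ f, ?_, Polynomial.natDegree_modByMonic_lt _ hmon hf1⟩
    rw [Polynomial.modByMonic_eq_sub_mul_div _ f, map_sub, hg₀, map_mul,
      AdjoinRoot.mk_self, zero_mul, sub_zero]
  choose G hGmk hGdeg using hmk
  obtain ⟨i₀, hi₀⟩ : ∃ i, w i ≠ 0 := by
    by_contra h; push_neg at h; exact hw0 (funext h)
  have hGi₀ : G i₀ ≠ 0 := fun h => hi₀ (by rw [← hGmk i₀, h, map_zero])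
  -- extract gcd
  obtain ⟨G', hG'eq, hG'gcd⟩ := Finset.extract_gcd G ⟨i₀, Finset.mem_univ i₀⟩
  set c := Finset.univ.gcd G with hc
  have hc0 : c ≠ 0 := fun h =>
    hGi₀ (Finset.gcd_eq_zero_iff.mp h i₀ (Finset.mem_univ i₀))
  have hGeq : ∀ i, G i = c * G' i := fun i => hG'eq i (Finset.mem_univ i)
  have hG'i₀ : G' i₀ ≠ 0 := by
    intro h
    apply hGi₀; rw [hGeq i₀, h, mul_zero]
  have hdeg' : ∀ i, (G' i).natDegree ≤ n - 1 := by
    intro i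
    by_cases h : G' i = 0
    · simp [h]
    · have hGi : G i ≠ 0 := by rw [hGeq i]; exact mul_ne_zero hc0 h
      have := Polynomial.natDegree_mul hc0 h
      rw [← hGeq i] at this
      have h2 := hGdeg i
      omega
  set d := Finset.univ.sup (fun i => (G' i).natDegree) with hd
  have hdle : d ≤ n - 1 := Finset.sup_le fun i _ => hdeg' i
  have hgle : ∀ i, (G' i).natDegree ≤ d := fun i => Finset.le_sup (f := fun j => (G' j).natDegree) (Finset.mem_univ i)
  set L : Fin m → k := fun i => (G' i).coeff d with hL
  have hL0 : L ≠ 0 := by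
    obtain ⟨i₁, -, hi₁⟩ := Finset.exists_mem_eq_sup Finset.univ ⟨i₀, Finset.mem_univ i₀⟩
      (fun i => (G' i).natDegree)
    have hdi : d = (G' i₁).natDegree := hd.trans hi₁
    intro hfun
    by_cases h1 : G' i₁ = 0
    · have hd0 : d = 0 := by rw [hdi, h1, Polynomial.natDegree_zero]
      have he : G' i₀ = Polynomial.C ((G' i₀).coeff 0) :=
        Polynomial.eq_C_of_natDegree_le_zero (by rw [← hd0]; exact hgle i₀)
      have hc0' : (G' i₀).coeff 0 = 0 := by rw [← hd0]; exact congrFun hfun i₀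
      exact hG'i₀ (by rw [he, hc0', map_zero])
    · have h2 : (G' i₁).coeff d = 0 := congrFun hfun i₁
      rw [hdi] at h2
      exact h1 (Polynomial.leadingCoeff_eq_zero.mp h2)
  -- the key value H
  set H := MvPolynomial.aeval G' P with hH
  have hHtop : H.coeff (2 * d) = MvPolynomial.eval L P := coeff_aeval_top hP G' hgle
  have hevalL : MvPolynomial.eval L P ≠ 0 := fun h => hL0 (haniso L h)
  have hH0 : H ≠ 0 := fun h => hevalL (by rw [← hHtop, h, Polynomial.coeff_zero])
  have hHdeg : H.natDegree = 2 * d := by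
    refine le_antisymm (natDegree_aeval_le hP G' hgle) ?_
    exact Polynomial.le_natDegree_of_ne_zero (hHtop ▸ hevalL)
  -- f divides H
  have hfprime : Prime f := hirr.prime
  have hfH : f ∣ H := by
    have h1 : AdjoinRoot.mk f (MvPolynomial.aeval G P) = 0 := by
      rw [mk_aeval_comm]
      have : (fun i => AdjoinRoot.mk f (G i)) = w := funext hGmk
      rw [this, hw]
    have h2 : f ∣ MvPolynomial.aeval G P := AdjoinRoot.mk_eq_zero.mp h1
    have h3 : MvPolynomial.aeval G P = c ^ 2 * H := by
      have : G = fun i => c * G' i := funext hGeq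
      rw [this, aeval_mul_of_isHomogeneous hP c G']
    rw [h3] at h2
    have hfc : ¬ f ∣ c := by
      intro hdvd
      have h4 : n ≤ c.natDegree := Polynomial.natDegree_le_of_dvd hdvd hc0
      have h5 : c.natDegree ≤ (G i₀).natDegree := by
        have := Polynomial.natDegree_mul hc0 hG'i₀
        rw [← hGeq i₀] at this; omega
      have := hGdeg i₀; omega
    rcases hfprime.dvd_or_dvd h2 with h | h
    · exact absurd (hfprime.dvd_of_dvd_pow h) hfc
    · exact h
  have hn2d : n ≤ 2 * d := by
    have := Polynomial.natDegree_le_of_dvd hfH hH0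
    omega
  obtain ⟨h, hHfh⟩ := hfH
  have hh0 : h ≠ 0 := fun h' => hH0 (by rw [hHfh, h', mul_zero])
  have hf0 : f ≠ 0 := hirr.ne_zero
  have hhdeg : h.natDegree = 2 * d - n := by
    have := Polynomial.natDegree_mul hf0 hh0
    rw [← hHfh, hHdeg] at this
    omega
  have hhodd : Odd h.natDegree := by
    rw [hhdeg]
    rcases hodd with ⟨t, ht⟩
    exact ⟨d - t - 1, by omega⟩
  obtain ⟨p, hpirr, hpdvd, hpodd⟩ :=
    exists_odd_irreducible_factor h.natDegree h le_rfl hh0 hhodd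
  have hpn : p.natDegree < n := by
    have h1 : p.natDegree ≤ h.natDegree := Polynomial.natDegree_le_of_dvd hpdvd hh0
    omega
  -- pass to AdjoinRoot p
  haveI : Fact (Irreducible p) := ⟨hpirr⟩
  have hp0 : p ≠ 0 := hpirr.ne_zero
  haveI : FiniteDimensional k (AdjoinRoot p) :=
    Module.Finite.of_basis (AdjoinRoot.powerBasis hp0).basis
  have hfr : Module.finrank k (AdjoinRoot p) = p.natDegree := by
    rw [(AdjoinRoot.powerBasis hp0).finrank, AdjoinRoot.powerBasis_dim]
  have hpH : p ∣ H := hpdvd.trans ⟨f, by rw [hHfh]; ring⟩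
  have hw' : MvPolynomial.aeval (fun i => AdjoinRoot.mk p (G' i)) P = 0 := by
    rw [← mk_aeval_comm, ← hH, AdjoinRoot.mk_eq_zero.mpr hpH]
  have := IH p.natDegree hpn hpodd (AdjoinRoot p) hfr _ hw'
  have hpdvdall : ∀ i, p ∣ G' i := by
    intro i
    have h5 := congrFun this i
    exact AdjoinRoot.mk_eq_zero.mp h5
  have : p ∣ Finset.univ.gcd G' := Finset.dvd_gcd fun i _ => hpdvdall i
  rw [hG'gcd] at this
  exact hpirr.not_isUnit (isUnit_of_dvd_one this)
theorem springer_core (n : ℕ) :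
    ∀ (k E : Type u) [Field k] [Field E] [Algebra k E] [FiniteDimensional k E],
      Odd n → Module.finrank k E = n →
      ∀ (m : ℕ) (P : MvPolynomial (Fin m) k), P.IsHomogeneous 2 →
      (∀ c : Fin m → k, MvPolynomial.eval c P = 0 → c = 0) →
      ∀ w : Fin m → E, MvPolynomial.aeval w P = 0 → w = 0 := by
  induction n using Nat.strong_induction_on with
  | _ n ih =>
  intro k E _ _ _ _ hodd hrank m P hP haniso w hw
  by_cases hn1 : n = 1
  · -- degree one: E = k
    subst hn1
    have hbt : (⊥ : Subalgebra k E) = ⊤ := Subalgebra.bot_eq_top_of_finrank_eq_one hrank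
    have hmem : ∀ i, ∃ c : k, algebraMap k E c = w i := by
      intro i
      have : w i ∈ (⊥ : Subalgebra k E) := hbt ▸ Algebra.mem_top
      exact Algebra.mem_bot.mp this
    choose c hc using hmem
    have hcomm : algebraMap k E (MvPolynomial.eval c P) = MvPolynomial.aeval w P := by
      have h0 : MvPolynomial.eval c P = MvPolynomial.eval₂ (RingHom.id k) c P := rfl
      have h1 : (⇑(algebraMap k E)) ∘ c = w := funext hc
      rw [h0, MvPolynomial.eval₂_comp_left, RingHom.comp_id, h1, ← MvPolynomial.aeval_def]
    rw [hw] at hcomm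
    have hc0 : MvPolynomial.eval c P = 0 :=
      (map_eq_zero_iff _ (algebraMap k E).injective).mp hcomm
    have hceq := haniso c hc0
    funext i
    rw [← hc i, congrFun hceq i]
    simp
  · -- n > 1
    obtain ⟨α, hα⟩ : ∃ α : E, α ∉ (⊥ : IntermediateField k E) := by
      by_contra h
      push_neg at h
      have hbt : (⊥ : IntermediateField k E) = ⊤ := by
        ext x; simp [h x, IntermediateField.mem_top]
      have h1 : Module.finrank k (⊤ : IntermediateField k E) = 1 :=
        IntermediateField.finrank_eq_one_iff.mpr hbt.symm
      have h2 : Module.finrank k (⊤ : IntermediateField k E) = Module.finrank k E :=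
        (IntermediateField.topEquiv (F := k) (E := E)).toLinearEquiv.finrank_eq
      omega
    have hint : IsIntegral k α := IsIntegral.of_finite k α
    set F := IntermediateField.adjoin k {α} with hF
    by_cases hFtop : F = ⊤
    · -- simple extension: use springer_step via AdjoinRoot (minpoly k α)
      set f := minpoly k α with hf
      have hirr : Irreducible f := minpoly.irreducible hint
      have hmon : f.Monic := minpoly.monic hint
      have hfr : Module.finrank k F = f.natDegree := IntermediateField.adjoin.finrank hint
      have hFE : Module.finrank k F = Module.finrank k E :=
        ((IntermediateField.equivOfEq hFtop).trans IntermediateField.topEquiv).toLinearEquiv.finrank_eq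
      have hfn : f.natDegree = n := by rw [← hfr, hFE, hrank]
      have hoddf : Odd f.natDegree := hfn ▸ hodd
      have step := springer_step hP haniso hirr hmon hoddf
        (fun n' hlt hodd' E' _ _ _ hrank' w' hw' =>
          ih n' (hfn ▸ hlt) k E' hodd' hrank' m P hP haniso w' hw')
      set ψ : AdjoinRoot f ≃ₐ[k] E :=
        (IntermediateField.adjoinRootEquivAdjoin k hint).trans
          ((IntermediateField.equivOfEq hFtop).trans IntermediateField.topEquiv) with hψ
      have hw2 : MvPolynomial.aeval (fun i => ψ.symm (w i)) P = 0 := by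
        have h6 := MvPolynomial.comp_aeval_apply (f := w) (ψ.symm : E →ₐ[k] AdjoinRoot f) P
        simp only [AlgEquiv.coe_algHom] at h6
        rw [← h6, hw, map_zero]
      have := step _ hw2
      funext i
      have h5 : ψ.symm (w i) = 0 := congrFun this i
      have := congrArg ψ h5
      rwa [AlgEquiv.apply_symm_apply, map_zero] at this
    · -- tower case
      haveI : FiniteDimensional F E := FiniteDimensional.right k F E
      set a := Module.finrank k F with ha
      set b := Module.finrank F E with hb
      have hab : a * b = n := by rw [ha, hb, Module.finrank_mul_finrank, hrank]
      have hoa : Odd a ∧ Odd b := Nat.odd_mul.mp (hab ▸ hodd)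
      have ha1 : a ≠ 1 := by
        intro h
        exact hα (IntermediateField.finrank_eq_one_iff.mp h ▸
          IntermediateField.mem_adjoin_simple_self k α)
      have hb1 : b ≠ 1 := by
        intro h
        apply hFtop
        have hbt : (⊥ : Subalgebra F E) = ⊤ := Subalgebra.bot_eq_top_of_finrank_eq_one h
        ext x
        simp only [IntermediateField.mem_top, iff_true]
        have : x ∈ (⊥ : Subalgebra F E) := hbt ▸ Algebra.mem_top
        obtain ⟨y, hy⟩ := Algebra.mem_bot.mp this
        rw [← hy]
        exact y.2
      have hn0 : n ≠ 0 := by intro h; rw [h] at hodd; simp [Nat.odd_iff] at hodd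
      have ha0 : a ≠ 0 := fun h => hn0 (by rw [← hab, h, zero_mul])
      have hb0 : b ≠ 0 := fun h => hn0 (by rw [← hab, h, mul_zero])
      have haln : a < n := by
        have h2 : 2 ≤ b := by omega
        have := Nat.pos_of_ne_zero ha0
        nlinarith [hab]
      have hbln : b < n := by
        have h2 : 2 ≤ a := by omega
        have := Nat.pos_of_ne_zero hb0
        nlinarith [hab]
      -- P is anisotropic over F
      have hanisoF : ∀ c : Fin m → F, MvPolynomial.aeval c P = 0 → c = 0 :=
        fun c hc => ih a haln k F hoa.1 rfl m P hP haniso c hc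
      set PF := MvPolynomial.map (algebraMap k F) P with hPF
      have hPFhom : PF.IsHomogeneous 2 := hP.map _
      have hanisoPF : ∀ c : Fin m → F, MvPolynomial.eval c PF = 0 → c = 0 := by
        intro c hc
        apply hanisoF
        rwa [MvPolynomial.aeval_def, ← MvPolynomial.eval_map]
      refine ih b hbln F E hoa.2 rfl m PF hPFhom hanisoPF w ?_
      rwa [MvPolynomial.aeval_map_algebraMap]
section Bridge

variable {k V : Type*} [Field k] [AddCommGroup V] [Module k V] (q : QuadraticForm k V)

/-- The homogeneous degree-2 polynomial representing `q` on the span of `v`. -/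
noncomputable def quadPoly {m : ℕ} (v : Fin m → V) : MvPolynomial (Fin m) k :=
  (∑ i, MvPolynomial.C (q (v i)) * (MvPolynomial.X i) ^ 2) +
    ∑ ij ∈ Finset.univ.sym2.filter (fun ij => ¬ ij.IsDiag),
      Sym2.lift ⟨fun i j => MvPolynomial.C (QuadraticMap.polar q (v i) (v j)) *
          (MvPolynomial.X i * MvPolynomial.X j),
        fun i j => by simp only []; rw [QuadraticMap.polar_comm]; ring⟩ ij

lemma quadPoly_isHomogeneous {m : ℕ} (v : Fin m → V) :
    (quadPoly q v).IsHomogeneous 2 := by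
  refine MvPolynomial.IsHomogeneous.add ?_ ?_
  · exact MvPolynomial.IsHomogeneous.sum _ _ _
      (fun i _ => MvPolynomial.isHomogeneous_C_mul_X_pow _ i 2)
  · refine MvPolynomial.IsHomogeneous.sum _ _ _ (fun ij hij => ?_)
    induction ij using Sym2.ind with
    | _ i j =>
      rw [Sym2.lift_mk]
      simpa using ((MvPolynomial.isHomogeneous_X k i).mul
        (MvPolynomial.isHomogeneous_X k j)).C_mul _

lemma quadPoly_aeval {m : ℕ} (v : Fin m → V) {A : Type*} [CommRing A] [Algebra k A]
    (x : Fin m → A) :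
    MvPolynomial.aeval x (quadPoly q v) =
      (∑ i, algebraMap k A (q (v i)) * x i ^ 2) +
        ∑ ij ∈ Finset.univ.sym2.filter (fun ij => ¬ ij.IsDiag),
          Sym2.lift ⟨fun i j => algebraMap k A (QuadraticMap.polar q (v i) (v j)) *
              (x i * x j),
            fun i j => by simp only []; rw [QuadraticMap.polar_comm]; ring⟩ ij := by
  unfold quadPoly
  rw [map_add, map_sum, map_sum]
  congr 1
  · exact Finset.sum_congr rfl fun i _ => by simp
  · refine Finset.sum_congr rfl fun ij _ => ?_
    induction ij using Sym2.ind with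
    | _ i j => simp

end Bridge
section Expand

variable {k V : Type*} [Field k] [AddCommGroup V] [Module k V] (q : QuadraticForm k V)

lemma quadPoly_eval_self {m : ℕ} (v : Fin m → V) (c : Fin m → k) :
    MvPolynomial.eval c (quadPoly q v) = q (∑ i, c i • v i) := by
  have h1 : MvPolynomial.eval c (quadPoly q v) = MvPolynomial.aeval c (quadPoly q v) := by
    rw [MvPolynomial.aeval_def, Algebra.algebraMap_self, MvPolynomial.eval]
    rfl
  rw [h1, quadPoly_aeval, QuadraticMap.map_sum]
  congr 1
  · refine Finset.sum_congr rfl fun i _ => ?_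
    rw [QuadraticMap.map_smul]
    simp [Algebra.algebraMap_self]
    ring
  · refine Finset.sum_congr rfl fun ij _ => ?_
    induction ij using Sym2.ind with
    | _ i j =>
      rw [Sym2.lift_mk]
      change _ = QuadraticMap.polar _ (c i • v i) (c j • v j)
      dsimp only
      rw [QuadraticMap.polar_smul_left, QuadraticMap.polar_smul_right]
      simp [Algebra.algebraMap_self]
      ring

variable {E : Type*} [Field E] [Algebra k E]
    (Q : QuadraticForm E (E ⊗[k] V))
    (hQ : ∀ v : V, Q ((1 : E) ⊗ₜ[k] v) = algebraMap k E (q v))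

include hQ in
lemma quadPoly_aeval_eq_Q {m : ℕ} (v : Fin m → V) (e : Fin m → E) :
    MvPolynomial.aeval e (quadPoly q v) = Q (∑ i, e i ⊗ₜ[k] v i) := by
  rw [quadPoly_aeval, QuadraticMap.map_sum]
  have htm : ∀ i, e i ⊗ₜ[k] v i = e i • ((1 : E) ⊗ₜ[k] v i) := by
    intro i
    rw [TensorProduct.smul_tmul', smul_eq_mul, mul_one]
  have hpol : ∀ a b : V, QuadraticMap.polar (⇑Q) ((1:E) ⊗ₜ[k] a) ((1:E) ⊗ₜ[k] b)
      = algebraMap k E (QuadraticMap.polar (⇑q) a b) := by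
    intro a b
    rw [QuadraticMap.polar, QuadraticMap.polar, ← TensorProduct.tmul_add, hQ, hQ, hQ,
      map_sub, map_sub]
  congr 1
  · refine Finset.sum_congr rfl fun i _ => ?_
    rw [htm i, QuadraticMap.map_smul, hQ, smul_eq_mul]
    ring
  · refine Finset.sum_congr rfl fun ij _ => ?_
    induction ij using Sym2.ind with
    | _ i j =>
      rw [Sym2.lift_mk]
      change _ = QuadraticMap.polar _ (e i ⊗ₜ[k] v i) (e j ⊗ₜ[k] v j)
      dsimp only
      rw [htm i, htm j,
        QuadraticMap.polar_smul_left, QuadraticMap.polar_smul_right, hpol, smul_eq_mul,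
        smul_eq_mul]
      ring

end Expand

/-- Let `X` be an anisotropic projective quadric over a field `k`.
Then every closed point of `X` has even degree over `k`.  A closed point of degree `d`
corresponds to a point of `X` over a finite field extension `E/k` of degree `d`, i.e.
a nontrivial zero over `E` of the extended form `q_E` (characterized by
`q_E (1 ⊗ v) = q v`); so the statement reads: if the quadratic form of `X` becomes
isotropic over a finite extension `E`, then `[E : k]` is even. -/
theorem closed_points_of_anisotropic_quadric_have_even_degree
    (k V : Type*) [Field k] [AddCommGroup V] [Module k V]
    (q : QuadraticForm k V) (han : q.Anisotropic)
    (E : Type*) [Field E] [Algebra k E] [FiniteDimensional k E]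
    (Q : QuadraticForm E (E ⊗[k] V))
    (hQ : ∀ v : V, Q ((1 : E) ⊗ₜ[k] v) = algebraMap k E (q v))
    (hiso : ∃ w : E ⊗[k] V, w ≠ 0 ∧ Q w = 0) :
    Even (Module.finrank k E) := by
  by_contra heven
  rw [Nat.not_even_iff_odd] at heven
  obtain ⟨w, hw0, hwQ⟩ := hiso
  classical
  -- write w in coordinates w.r.t. a basis of V
  set b := Module.Basis.ofVectorSpace k V with hb
  set bE := Algebra.TensorProduct.basis E b with hbE
  set r := bE.repr w with hr
  have hr0 : r ≠ 0 := fun h => hw0 (by rwa [hr, LinearEquiv.map_eq_zero_iff] at h)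
  set s := r.support with hs
  have hsne : s.Nonempty := Finsupp.support_nonempty_iff.mpr hr0
  set m := s.card with hm
  have hm0 : 0 < m := Finset.card_pos.mpr hsne
  set σe := s.equivFin with hσ
  set v : Fin m → V := fun i => b ((σe.symm i) : _) with hv
  set e : Fin m → E := fun i => r ((σe.symm i) : _) with he
  have hene : ∀ i, e i ≠ 0 := fun i => Finsupp.mem_support_iff.mp (σe.symm i).2
  have hsum : w = ∑ i, e i ⊗ₜ[k] v i := by
    conv_lhs => rw [← bE.linearCombination_repr w]
    rw [Finsupp.linearCombination_apply, Finsupp.sum, ← hr, ← hs]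
    rw [← Finset.sum_coe_sort s (fun a => r a • bE a)]
    rw [← Equiv.sum_comp σe.symm (fun x : {x // x ∈ s} => r x • bE (x : _))]
    refine Finset.sum_congr rfl fun i _ => ?_
    rw [hbE, Algebra.TensorProduct.basis_apply, TensorProduct.smul_tmul', smul_eq_mul,
      mul_one]
  -- the associated polynomial
  set P := quadPoly q v with hP
  have hPhom : P.IsHomogeneous 2 := quadPoly_isHomogeneous q v
  have haniso : ∀ c : Fin m → k, MvPolynomial.eval c P = 0 → c = 0 := by
    intro c hc
    have h2 := quadPoly_eval_self q v c
    rw [hc] at h2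
    have h3 : (∑ i, c i • v i) = 0 := han _ h2.symm
    have hlin : LinearIndependent k v := b.linearIndependent.comp _
      (fun i j hij => σe.symm.injective (Subtype.val_injective hij))
    have h4 := linearIndependent_iff'.mp hlin Finset.univ c h3
    funext i
    exact h4 i (Finset.mem_univ i)
  have hisoE : MvPolynomial.aeval e P = 0 := by
    rw [hP, quadPoly_aeval_eq_Q q Q hQ v e, ← hsum, hwQ]
  -- transfer the base field into the universe of E
  set K := (⊥ : IntermediateField k E) with hK
  set ε : (K : Type _) ≃ₐ[k] k := IntermediateField.botEquiv k E with hε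
  set εr : k ≃+* K := ε.symm.toRingEquiv with hεr
  set M := MvPolynomial.map (εr : k →+* K) P with hM
  have hMhom : M.IsHomogeneous 2 := hPhom.map _
  have hMan : ∀ c : Fin m → K, MvPolynomial.eval c M = 0 → c = 0 := by
    intro c hc
    have hid : ((εr.symm : K →+* k)).comp (εr : k →+* K) = RingHom.id k := by
      ext x; simp
    have h5 : MvPolynomial.eval (fun i => εr.symm (c i)) P = 0 := by
      have h6 : MvPolynomial.eval c M = MvPolynomial.eval₂ (εr : k →+* K) c P :=
        MvPolynomial.eval_map _ _ _
      have h7 := congrArg (εr.symm : K →+* k) (h6 ▸ hc)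
      rw [MvPolynomial.eval₂_comp_left, hid, map_zero] at h7
      rw [← h7]
      rfl
    have h8 := haniso _ h5
    funext i
    have h9 := congrFun h8 i
    simp only [Pi.zero_apply] at h9 ⊢
    have := congrArg εr h9
    rwa [RingEquiv.apply_symm_apply, map_zero] at this
  have hMiso : MvPolynomial.aeval e M = 0 := by
    have hcomp : (algebraMap K E).comp (εr : k →+* K) = algebraMap k E := by
      ext x
      show (algebraMap K E) (ε.symm x) = algebraMap k E x
      rw [hε, IntermediateField.botEquiv_symm]
      exact (IsScalarTower.algebraMap_apply k K E x).symm
    rw [hM, MvPolynomial.aeval_def, MvPolynomial.eval₂_map, hcomp,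
      ← MvPolynomial.aeval_def, hisoE]
  haveI : FiniteDimensional K E := inferInstance
  have hfr : Module.finrank K E = Module.finrank k E := by
    have h10 := Module.finrank_mul_finrank k K E
    have h11 : Module.finrank k K = 1 := IntermediateField.finrank_bot
    rw [h11, one_mul] at h10
    exact h10
  have hcore := springer_core (Module.finrank K E) K E (hfr ▸ heven) rfl m M hMhom hMan e hMiso
  exact hene ⟨0, hm0⟩ (congrFun hcore ⟨0, hm0⟩)
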